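/- Let F ∈ M, let {I^{p,q}} be the Deligne bigrading of (F,W), and let Lie(G_ℂ) := {α ∈ End(V) : α(W_k) ⊆ W_k for all k and S_k(Gr_k(α)u, v) + S_k(u, Gr_k(α)v) = 0 for all k and all u,v ∈ Gr^W_k}, with induced bigrading g^{r,s} := {α ∈ Lie(G_ℂ) : α(I^{p,q}) ⊆ I^{p+r,q+s} for all p,q}. Then Lie(G_ℂ) = ⊕_{r+s≤0} g^{r,s}, the subalgebra Lie(G_ℂ^F) := {α ∈ Lie(G_ℂ) : α(F^p) ⊆ F^p for all p} equals ⊕_{r≥0, r+s≤0} g^{r,s}, and the nilpotent subalgebra q_F := ⊕_{r<0, r+s≤0} g^{r,s} is a vector space complement to Lie(G_ℂ^F) in Lie(G_ℂ): Lie(G_ℂ) = Lie(G_ℂ^F) ⊕ q_F. -/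

import Mathlib

open Submodule

noncomputable section

instance : RingHomSurjective (starRingEnd ℂ) :=
  ⟨fun x => ⟨starRingEnd ℂ x, Complex.conj_conj x⟩⟩

variable {V : Type*} [AddCommGroup V] [Module ℂ V]

/-- A finite decreasing filtration of `V` by complex subspaces. -/
def IsDecFilt (F : ℤ → Submodule ℂ V) : Prop :=
  (∀ p : ℤ, F (p + 1) ≤ F p) ∧ (∃ a : ℤ, F a = ⊤) ∧ ∃ b : ℤ, F b = ⊥

/-- A finite increasing filtration of `V` by complex subspaces. -/
def IsIncFilt (W : ℤ → Submodule ℂ V) : Prop :=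
  (∀ k : ℤ, W k ≤ W (k + 1)) ∧ (∃ a : ℤ, W a = ⊥) ∧ ∃ b : ℤ, W b = ⊤

/-- The subspace `F^p ∩ W_k + W_{k-1}` of `V`, representing the `p`-th piece
`F^p Gr^W_k` of the induced filtration on `Gr^W_k = W_k/W_{k-1}`. -/
def grF (F W : ℤ → Submodule ℂ V) (k p : ℤ) : Submodule ℂ V :=
  F p ⊓ W k ⊔ W (k - 1)

/-- The subspace of `V` representing the Hodge piece
`H^{p,k-p} = F^p Gr^W_k ∩ conj (F^{k-p} Gr^W_k)` of `Gr^W_k`. -/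
def grH (σ : V →ₛₗ[starRingEnd ℂ] V) (F W : ℤ → Submodule ℂ V) (k p : ℤ) : Submodule ℂ V :=
  grF F W k p ⊓ grF (fun q => (F q).map σ) W k (k - p)

/-- The filtration induced by `F` on `Gr^W_k` is a pure Hodge structure of weight `k`:
the pieces `H^{p,k-p}` span `Gr^W_k` and are independent there (all subspaces of the
quotient are represented by their preimages in `V`, which contain `W_{k-1}`). -/
def IsPureOnGr (σ : V →ₛₗ[starRingEnd ℂ] V) (F W : ℤ → Submodule ℂ V) (k : ℤ) : Prop :=
  (⨆ p : ℤ, grH σ F W k p) = W k ∧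
  ∀ p : ℤ, grH σ F W k p ⊓ (⨆ (q : ℤ) (_ : q ≠ p), grH σ F W k q) = W (k - 1)

/-- `(F, W)` is a mixed Hodge structure on `V` (relative to the conjugation `σ`). -/
def IsMHS (σ : V →ₛₗ[starRingEnd ℂ] V) (F W : ℤ → Submodule ℂ V) : Prop :=
  IsDecFilt F ∧ IsIncFilt W ∧ (∀ k : ℤ, (W k).map σ = W k) ∧ ∀ k : ℤ, IsPureOnGr σ F W k

/-- `I` is a bigrading of the mixed Hodge structure `(F, W)`. -/
def IsBigrading (F W : ℤ → Submodule ℂ V) (I : ℤ → ℤ → Submodule ℂ V) : Prop :=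
  DirectSum.IsInternal (fun pq : ℤ × ℤ => I pq.1 pq.2) ∧
  (∀ p : ℤ, F p = ⨆ (rs : ℤ × ℤ) (_ : p ≤ rs.1), I rs.1 rs.2) ∧
  ∀ k : ℤ, W k = ⨆ (rs : ℤ × ℤ) (_ : rs.1 + rs.2 ≤ k), I rs.1 rs.2

/-- `⊕_{r < p, s < q} I^{r,s}`. -/
def lowPart (I : ℤ → ℤ → Submodule ℂ V) (p q : ℤ) : Submodule ℂ V :=
  ⨆ (rs : ℤ × ℤ) (_ : rs.1 < p ∧ rs.2 < q), I rs.1 rs.2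

/-- `I` is a bigrading of `(F, W)` satisfying the Deligne conjugation-symmetry
condition `I^{p,q} ≡ conj (I^{q,p}) mod ⊕_{r<p,s<q} I^{r,s}` (equality of images in the
quotient by `⊕_{r<p,s<q} I^{r,s}`). -/
def IsDeligne (σ : V →ₛₗ[starRingEnd ℂ] V) (F W : ℤ → Submodule ℂ V)
    (I : ℤ → ℤ → Submodule ℂ V) : Prop :=
  IsBigrading F W I ∧
  ∀ p q : ℤ, I p q ⊔ lowPart I p q = (I q p).map σ ⊔ lowPart I p q

variable (W : ℤ → Submodule ℂ V) (S : ℤ → V →ₗ[ℂ] V →ₗ[ℂ] ℂ)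

/-- The family of bilinear forms `S_k` represents graded bilinear forms on the
quotients `Gr^W_k = W_k/W_{k-1}`: each `S_k` kills `W_{k-1}` (so it descends to
`Gr^W_k`), is nondegenerate on `Gr^W_k`, and has parity `(-1)^k`. -/
def IsGradedForms : Prop :=
  (∀ k : ℤ, ∀ u v : V, u ∈ W (k - 1) → S k u v = 0) ∧
  (∀ k : ℤ, ∀ u v : V, v ∈ W (k - 1) → S k u v = 0) ∧
  (∀ k : ℤ, ∀ u ∈ W k, (∀ v ∈ W k, S k u v = 0) → u ∈ W (k - 1)) ∧
  ∀ k : ℤ, ∀ u v : V, S k u v = (-1 : ℂ) ^ k * S k v u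

/-- `z` is a positive real number (inside `ℂ`). -/
def IsPosReal (z : ℂ) : Prop := 0 < z.re ∧ z.im = 0

/-- `F` belongs to the classifying space `M` of graded-polarized mixed Hodge
structures: `(F, W)` is a mixed Hodge structure whose Deligne bigrading has prescribed
dimensions `h^{p,q}` and whose induced pure Hodge structure on each `Gr^W_k` is
polarized by `S_k` (first bilinear relation and positivity; the `(p, k-p)` Hodge piece
of `Gr^W_k` is represented by `grH σ F W k p ⊆ V`, and the class of `v` is nonzero
precisely when `v ∉ W_{k-1}`). -/
def memM (σ : V →ₛₗ[starRingEnd ℂ] V) (h : ℤ → ℤ → ℕ) (F : ℤ → Submodule ℂ V) : Prop :=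
  IsMHS σ F W ∧
  (∃ I : ℤ → ℤ → Submodule ℂ V, IsDeligne σ F W I ∧
      ∀ p q : ℤ, Module.finrank ℂ (I p q) = h p q) ∧
  (∀ k p : ℤ, ∀ u ∈ F p ⊓ W k, ∀ v ∈ F (k - p + 1) ⊓ W k, S k u v = 0) ∧
  ∀ k p : ℤ, ∀ v ∈ grH σ F W k p, v ∉ W (k - 1) →
    IsPosReal (Complex.I ^ (2 * p - k) * S k v (σ v))

/-- The subspace of `End(V)` of endomorphisms mapping `P` into `Q`. -/
def mapsInto (P Q : Submodule ℂ V) : Submodule ℂ (Module.End ℂ V) where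
  carrier := {α | ∀ v ∈ P, α v ∈ Q}
  add_mem' := by
    intro a b ha hb v hv
    have h : (a + b) v = a v + b v := rfl
    rw [h]
    exact Q.add_mem (ha v hv) (hb v hv)
  zero_mem' := by
    intro v hv
    show (0 : Module.End ℂ V) v ∈ Q
    simp
  smul_mem' := by
    intro c a ha v hv
    have h : (c • a) v = c • a v := rfl
    rw [h]
    exact Q.smul_mem c (ha v hv)

/-- Conjugation on `End(V)` induced by the conjugation `σ` of `V`:
`α ↦ σ ∘ α ∘ σ`. -/
def conjEnd (σ : V →ₛₗ[starRingEnd ℂ] V) (α : Module.End ℂ V) : Module.End ℂ V where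
  toFun v := σ (α (σ v))
  map_add' x y := by simp
  map_smul' c v := by simp [map_smulₛₗ]

/-- Conjugation on `End(V)` as an antilinear map. -/
def conjEndSL (σ : V →ₛₗ[starRingEnd ℂ] V) :
    Module.End ℂ V →ₛₗ[starRingEnd ℂ] Module.End ℂ V where
  toFun := conjEnd σ
  map_add' α β := by
    ext v
    simp [conjEnd]
  map_smul' c α := by
    ext v
    simp [conjEnd]

/-- `gl(V)^{r,s}` relative to a bigrading `I` of `V`: endomorphisms with
`α(I^{p,q}) ⊆ I^{p+r,q+s}` for all `p, q`. -/
def endShiftI (I : ℤ → ℤ → Submodule ℂ V) (r s : ℤ) : Submodule ℂ (Module.End ℂ V) :=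
  ⨅ pq : ℤ × ℤ, mapsInto (I pq.1 pq.2) (I (pq.1 + r) (pq.2 + s))

/-- The exponential of a (nilpotent) endomorphism of a finite-dimensional space,
as the truncated exponential series. -/
def expEnd [FiniteDimensional ℂ V] (α : Module.End ℂ V) : Module.End ℂ V :=
  ∑ i ∈ Finset.range (Module.finrank ℂ V + 1), ((i.factorial : ℂ)⁻¹) • α ^ i

/-- The bilinear-form part of `Lie(G_ℂ)`: endomorphisms acting on each `Gr^W_k` as
infinitesimal isometries of `S_k`. -/
def infinIsom : Submodule ℂ (Module.End ℂ V) where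
  carrier := {X | ∀ k : ℤ, ∀ u ∈ W k, ∀ v ∈ W k, S k (X u) v + S k u (X v) = 0}
  add_mem' := by
    intro X Y hX hY k u hu v hv
    have h1 := hX k u hu v hv
    have h2 := hY k u hu v hv
    have ha : (X + Y) u = X u + Y u := rfl
    have hb : (X + Y) v = X v + Y v := rfl
    rw [ha, hb, map_add, LinearMap.add_apply, map_add]
    linear_combination h1 + h2
  zero_mem' := by
    intro k u hu v hv
    show S k ((0 : Module.End ℂ V) u) v + S k u ((0 : Module.End ℂ V) v) = 0
    simp
  smul_mem' := by
    intro c X hX k u hu v hv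
    have h := hX k u hu v hv
    have ha : (c • X) u = c • X u := rfl
    have hb : (c • X) v = c • X v := rfl
    rw [ha, hb, map_smul, LinearMap.smul_apply, map_smul]
    simp only [smul_eq_mul]
    linear_combination c * h

/-- `Lie(G_ℂ)`: endomorphisms preserving `W` and acting on each `Gr^W_k` as
infinitesimal isometries of `S_k`. -/
def lieGC : Submodule ℂ (Module.End ℂ V) :=
  (⨅ k : ℤ, mapsInto (W k) (W k)) ⊓ infinIsom W S

/-- The bigraded piece `g^{r,s}` of `Lie(G_ℂ)` induced by the Deligne bigrading `I`. -/
def grs (I : ℤ → ℤ → Submodule ℂ V) (r s : ℤ) : Submodule ℂ (Module.End ℂ V) :=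
  lieGC W S ⊓ endShiftI I r s

/-- `Lie(G_ℂ^F)`-type condition: the subalgebra of endomorphisms preserving the
filtration `F`. -/
def stabF (F : ℤ → Submodule ℂ V) : Submodule ℂ (Module.End ℂ V) :=
  ⨅ p : ℤ, mapsInto (F p) (F p)

namespace St12
open DirectSum

variable {ι : Type*} [DecidableEq ι]
variable (J : ι → Submodule ℂ V)

noncomputable def dec (hInt : DirectSum.IsInternal J) : V ≃ₗ[ℂ] ⨁ i, J i :=
  (LinearEquiv.ofBijective (DirectSum.coeLinearMap J) hInt).symm

noncomputable def pr (hInt : DirectSum.IsInternal J) (i : ι) : Module.End ℂ V :=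
  (J i).subtype ∘ₗ (DirectSum.component ℂ ι (fun i => ↥(J i)) i) ∘ₗ (dec J hInt).toLinearMap

variable {J} (hInt : DirectSum.IsInternal J)
include hInt

lemma pr_mem (i : ι) (v : V) : pr J hInt i v ∈ J i := Submodule.coe_mem _

lemma dec_of_mem {j : ι} {v : V} (hv : v ∈ J j) :
    dec J hInt v = DirectSum.of (fun i => ↥(J i)) j ⟨v, hv⟩ := by
  rw [dec, LinearEquiv.symm_apply_eq]
  show v = DirectSum.coeLinearMap J _
  simp

lemma pr_of_mem_same {i : ι} {v : V} (hv : v ∈ J i) : pr J hInt i v = v := by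
  simp only [pr, LinearMap.comp_apply, LinearEquiv.coe_coe, dec_of_mem hInt hv]
  rw [← DirectSum.lof_eq_of ℂ, DirectSum.component.of, dif_pos rfl]
  rfl

lemma pr_of_mem_ne {i j : ι} (hij : i ≠ j) {v : V} (hv : v ∈ J j) : pr J hInt i v = 0 := by
  simp only [pr, LinearMap.comp_apply, LinearEquiv.coe_coe, dec_of_mem hInt hv]
  rw [← DirectSum.lof_eq_of ℂ, DirectSum.component.of, dif_neg (fun h => hij h.symm)]
  rfl

lemma pr_sum (T : Finset ι) (hT : ∀ i ∉ T, J i = ⊥) (v : V) :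
    ∑ i ∈ T, pr J hInt i v = v := by
  classical
  set x := dec J hInt v with hx
  have hsupp : x.support ⊆ T := by
    intro i hi
    by_contra hiT
    have : J i = ⊥ := hT i hiT
    have h0 : (x i : V) = 0 := (Submodule.mem_bot ℂ).mp (this ▸ (x i).2)
    exact (DFinsupp.mem_support_iff.mp hi) (Subtype.ext h0)
  have h1 : ∀ i ∈ T, pr J hInt i v = (x i : V) := fun i _ => rfl
  rw [Finset.sum_congr rfl h1]
  have h2 : ∑ i ∈ T, (x i : V) = ∑ i ∈ x.support, (x i : V) := by
    refine (Finset.sum_subset hsupp ?_).symm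
    intro i _ hi
    simp [DFinsupp.notMem_support_iff.mp hi]
  rw [h2]
  have h3 : v = DirectSum.coeLinearMap J x := by
    rw [hx]; exact ((dec J hInt).symm_apply_apply v).symm
  have h4 : (DirectSum.coeLinearMap J) x = ∑ i ∈ x.support, ((x i : V)) := by
    conv_lhs => rw [← DirectSum.sum_support_of x]
    rw [map_sum]
    exact Finset.sum_congr rfl fun i _ => by simp
  rw [← h4]
  exact h3.symm


lemma pr_eq_zero_of_mem_iSup {P : ι → Prop} {w : V} (hw : w ∈ ⨆ i, ⨆ (_ : P i), J i)
    {i : ι} (hi : ¬ P i) : pr J hInt i w = 0 := by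
  have hle : (⨆ j, ⨆ (_ : P j), J j) ≤ LinearMap.ker (pr J hInt i) := by
    refine iSup₂_le fun j hj v hv => LinearMap.mem_ker.mpr
      (pr_of_mem_ne hInt (by rintro rfl; exact hi hj) hv)
  exact LinearMap.mem_ker.mp (hle hw)

lemma mem_iSup_of_pr (T : Finset ι) (hT : ∀ i ∉ T, J i = ⊥) {P : ι → Prop} {w : V}
    (hw : ∀ i, ¬ P i → pr J hInt i w = 0) : w ∈ ⨆ i, ⨆ (_ : P i), J i := by
  rw [← pr_sum hInt T hT w]
  refine Submodule.sum_mem _ fun i _ => ?_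
  by_cases h : P i
  · exact Submodule.mem_iSup_of_mem i (Submodule.mem_iSup_of_mem h (pr_mem hInt i w))
  · rw [hw i h]; exact Submodule.zero_mem _

lemma eq_zero_of_disjoint_pieces (T : Finset ι) (hT : ∀ i ∉ T, J i = ⊥)
    {P Q : ι → Prop} (hPQ : ∀ i, P i → Q i → False) {w : V}
    (hP : w ∈ ⨆ i, ⨆ (_ : P i), J i) (hQ : w ∈ ⨆ i, ⨆ (_ : Q i), J i) : w = 0 := by
  rw [← pr_sum hInt T hT w]
  refine Finset.sum_eq_zero fun i _ => ?_
  by_cases h : P i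
  · exact pr_eq_zero_of_mem_iSup hInt hQ (fun hq => hPQ i h hq)
  · exact pr_eq_zero_of_mem_iSup hInt hP h

lemma end_eq_zero (T : Finset ι) (hT : ∀ i ∉ T, J i = ⊥) {Y : Module.End ℂ V}
    (h : ∀ i, ∀ v ∈ J i, Y v = 0) : Y = 0 := by
  ext v
  have h1 : Y v = Y (∑ i ∈ T, pr J hInt i v) := by rw [pr_sum hInt T hT]
  rw [h1, map_sum]
  simpa using Finset.sum_eq_zero fun i _ => h i _ (pr_mem hInt i v)

omit [DecidableEq ι] hInt in
lemma mapsInto_iSup {Y : Module.End ℂ V} {f : ι → ι}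
    (hY : ∀ i, ∀ v ∈ J i, Y v ∈ J (f i)) {P P' : ι → Prop}
    (him : ∀ i, P i → P' (f i)) :
    ∀ w ∈ (⨆ i, ⨆ (_ : P i), J i), Y w ∈ ⨆ i, ⨆ (_ : P' i), J i := by
  intro w hw
  have hle : (⨆ i, ⨆ (_ : P i), J i) ≤ Submodule.comap Y (⨆ i, ⨆ (_ : P' i), J i) :=
    iSup₂_le fun i hi v hv => Submodule.mem_comap.mpr
      (Submodule.mem_iSup_of_mem (f i) (Submodule.mem_iSup_of_mem (him i hi) (hY i v hv)))
  exact hle hw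


noncomputable def cpt (T : Finset ι) (f : ι → ι) (X : Module.End ℂ V) : Module.End ℂ V :=
  ∑ i ∈ T, (pr J hInt (f i)) ∘ₗ X ∘ₗ (pr J hInt i)

lemma cpt_apply_of_mem (T : Finset ι) (hT : ∀ i ∉ T, J i = ⊥) (f : ι → ι)
    (X : Module.End ℂ V) {j : ι} {v : V} (hv : v ∈ J j) :
    cpt hInt T f X v = pr J hInt (f j) (X v) := by
  unfold cpt
  rw [LinearMap.sum_apply, Finset.sum_eq_single j]
  · simp [pr_of_mem_same hInt hv]
  · intro i _ hij
    simp [pr_of_mem_ne hInt hij hv]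
  · intro hjT
    have hb : J j = ⊥ := hT j hjT
    have hv0 : v = 0 := (Submodule.mem_bot ℂ).mp (hb ▸ hv)
    simp [hv0]

lemma cpt_mem (T : Finset ι) (hT : ∀ i ∉ T, J i = ⊥) (f : ι → ι)
    (X : Module.End ℂ V) {j : ι} {v : V} (hv : v ∈ J j) :
    cpt hInt T f X v ∈ J (f j) := by
  rw [cpt_apply_of_mem hInt T hT f X hv]; exact pr_mem hInt _ _

lemma sum_cpt [AddCommGroup ι] (T : Finset ι) (hT : ∀ i ∉ T, J i = ⊥) (D : Finset ι)
    (hD : ∀ i ∈ T, ∀ j ∈ T, i - j ∈ D) (X : Module.End ℂ V) :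
    ∑ rs ∈ D, cpt hInt T (fun i => i + rs) X = X := by
  ext v
  rw [LinearMap.sum_apply]
  have hc : ∀ rs, cpt hInt T (fun i => i + rs) X v
      = ∑ i ∈ T, pr J hInt (i + rs) (X (pr J hInt i v)) := fun rs => by
    simp [cpt, LinearMap.sum_apply]
  rw [Finset.sum_congr rfl (fun rs _ => hc rs), Finset.sum_comm]
  have hinner : ∀ i ∈ T, ∑ rs ∈ D, pr J hInt (i + rs) (X (pr J hInt i v))
      = X (pr J hInt i v) := by
    intro i hiT
    set w := X (pr J hInt i v) with hw
    have hinj : ∀ a ∈ D, ∀ b ∈ D, i + a = i + b → a = b := fun a _ b _ h =>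
      add_left_cancel h
    have himg : ∑ j ∈ D.image (fun rs => i + rs), pr J hInt j w
        = ∑ rs ∈ D, pr J hInt (i + rs) w := Finset.sum_image hinj
    have hsub : T ⊆ D.image (fun rs => i + rs) := fun j hj =>
      Finset.mem_image.mpr ⟨j - i, hD j hj i hiT, by abel⟩
    have h2 : ∑ j ∈ D.image (fun rs => i + rs), pr J hInt j w = w := by
      rw [← Finset.sum_subset hsub
        (fun j _ hjT => (Submodule.mem_bot ℂ).mp ((hT j hjT) ▸ pr_mem hInt j w))]
      exact pr_sum hInt T hT w
    rw [← himg, h2]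
  rw [Finset.sum_congr rfl hinner, ← map_sum, pr_sum hInt T hT v]


omit [DecidableEq ι] hInt in
lemma conj_form (σ : V →ₛₗ[starRingEnd ℂ] V) (B : V →ₗ[ℂ] V →ₗ[ℂ] ℂ)
    (s : Set V) (hs : Submodule.span ℂ s = ⊤)
    (hfix : ∀ x ∈ s, σ x = x)
    (hrat : ∀ x ∈ s, ∀ y ∈ s, ∃ q : ℚ, B x y = (q : ℂ)) :
    ∀ u v : V, B (σ u) (σ v) = (starRingEnd ℂ) (B u v) := by
  let C : V →ₗ[ℂ] V →ₗ[ℂ] ℂ :=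
  { toFun := fun u =>
    { toFun := fun v => (starRingEnd ℂ) (B (σ u) (σ v))
      map_add' := fun y z => by simp
      map_smul' := fun c v => by
        simp only [AddHom.coe_mk, RingHom.id_apply, smul_eq_mul]
        rw [map_smulₛₗ, map_smul]
        simp }
    map_add' := fun u u' => by ext v; simp
    map_smul' := fun c u => by
      ext v
      simp only [LinearMap.coe_mk, AddHom.coe_mk, RingHom.id_apply, LinearMap.smul_apply,
        smul_eq_mul]
      rw [map_smulₛₗ, map_smul]
      simp }
  have hCB : C = B := by
    refine LinearMap.ext_on hs fun x hx => ?_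
    refine LinearMap.ext_on hs fun y hy => ?_
    obtain ⟨q, hq⟩ := hrat x hx y hy
    have : C x y = (starRingEnd ℂ) (B (σ x) (σ y)) := rfl
    rw [this, hfix x hx, hfix y hy, hq, map_ratCast]
  intro u v
  have h1 : C u v = B u v := by rw [hCB]
  have h2 : C u v = (starRingEnd ℂ) (B (σ u) (σ v)) := rfl
  rw [← h1, h2, Complex.conj_conj]

end St12

open St12 in
/-- For `F ∈ M` with Deligne bigrading `{I^{p,q}}`:
`Lie(G_ℂ) = ⊕_{r+s≤0} g^{r,s}`, the stabilizer of `F` in `Lie(G_ℂ)` is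
`⊕_{r≥0, r+s≤0} g^{r,s}`, and `q_F = ⊕_{r<0, r+s≤0} g^{r,s}` is a vector space
complement to it in `Lie(G_ℂ)`. -/
theorem stmt_12 [FiniteDimensional ℂ V] [Module ℚ V] [IsScalarTower ℚ ℂ V]
    (σ : V →ₛₗ[starRingEnd ℂ] V) (hσ : ∀ v, σ (σ v) = v)
    (VQ : Submodule ℚ V)
    (hQform : ∃ s : Set V, span ℚ s = VQ ∧ LinearIndependent ℂ ((↑) : s → V) ∧
      span ℂ s = ⊤)
    (hfix : ∀ v ∈ VQ, σ v = v)
    (hWfilt : IsIncFilt W)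
    (hWQ : ∀ k : ℤ, W k = span ℂ ((W k : Set V) ∩ (VQ : Set V)))
    (hS : IsGradedForms W S)
    (hSrat : ∀ k : ℤ, ∀ u ∈ VQ, ∀ v ∈ VQ, ∃ q : ℚ, S k u v = (q : ℂ))
    (h : ℤ → ℤ → ℕ)
    (F : ℤ → Submodule ℂ V) (hF : memM W S σ h F)
    (I : ℤ → ℤ → Submodule ℂ V) (hI : IsDeligne σ F W I) :
    ((⨆ (rs : ℤ × ℤ) (_ : rs.1 + rs.2 ≤ 0), grs W S I rs.1 rs.2) = lieGC W S) ∧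
    (∀ rs : ℤ × ℤ, rs.1 + rs.2 ≤ 0 →
      grs W S I rs.1 rs.2 ⊓
        (⨆ (rs' : ℤ × ℤ) (_ : rs' ≠ rs ∧ rs'.1 + rs'.2 ≤ 0), grs W S I rs'.1 rs'.2)
        = ⊥) ∧
    (lieGC W S ⊓ stabF F =
      ⨆ (rs : ℤ × ℤ) (_ : 0 ≤ rs.1 ∧ rs.1 + rs.2 ≤ 0), grs W S I rs.1 rs.2) ∧
    ((lieGC W S ⊓ stabF F) ⊓
        (⨆ (rs : ℤ × ℤ) (_ : rs.1 < 0 ∧ rs.1 + rs.2 ≤ 0), grs W S I rs.1 rs.2) = ⊥ ∧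
      (lieGC W S ⊓ stabF F) ⊔
        (⨆ (rs : ℤ × ℤ) (_ : rs.1 < 0 ∧ rs.1 + rs.2 ≤ 0), grs W S I rs.1 rs.2)
        = lieGC W S) := by
  classical
  obtain ⟨hBig, hconj⟩ := hI
  obtain ⟨hInt, hFeq, hWeq⟩ := hBig
  -- Finiteness of the bigrading
  have hfin : {i : ℤ × ℤ | (fun pq : ℤ × ℤ => I pq.1 pq.2) i ≠ ⊥}.Finite :=
    Submodule.finite_ne_bot_of_iSupIndep hInt.submodule_iSupIndep
  set T : Finset (ℤ × ℤ) := hfin.toFinset with hTdef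
  have hT : ∀ i ∉ T, (fun pq : ℤ × ℤ => I pq.1 pq.2) i = ⊥ := by
    intro i hi
    by_contra hne
    exact hi (by simp [hTdef, hne])
  set D : Finset (ℤ × ℤ) := (T ×ˢ T).image (fun x => x.1 - x.2) with hDdef
  have hD : ∀ i ∈ T, ∀ j ∈ T, i - j ∈ D := fun i hi j hj =>
    Finset.mem_image.mpr ⟨(i, j), Finset.mem_product.mpr ⟨hi, hj⟩, rfl⟩
  -- monotonicity of filtrations
  have hWmono : ∀ a b : ℤ, a ≤ b → W a ≤ W b := by
    intro a b hab
    refine Int.le_induction (motive := fun b _ => W a ≤ W b) le_rfl ?_ b hab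
    intro k _ ih
    exact le_trans ih (hWfilt.1 k)
  have hFanti : ∀ a b : ℤ, a ≤ b → F b ≤ F a := by
    intro a b hab
    refine Int.le_induction (motive := fun b _ => F b ≤ F a) le_rfl ?_ b hab
    intro k _ ih
    exact le_trans (hF.1.1.1 k) ih
  have hJW : ∀ i : ℤ × ℤ, ∀ k : ℤ, i.1 + i.2 ≤ k → I i.1 i.2 ≤ W k := by
    intro i k hk
    rw [hWeq k]
    exact le_iSup₂ (f := fun (rs : ℤ × ℤ) (_ : rs.1 + rs.2 ≤ k) => I rs.1 rs.2) i hk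
  have hJF : ∀ i : ℤ × ℤ, I i.1 i.2 ≤ F i.1 := by
    intro i
    rw [hFeq i.1]
    exact le_iSup₂ (f := fun (rs : ℤ × ℤ) (_ : i.1 ≤ rs.1) => I rs.1 rs.2) i le_rfl
  -- projections vanish outside W and F constraints
  have hprW : ∀ k : ℤ, ∀ w ∈ W k, ∀ i : ℤ × ℤ, k < i.1 + i.2 →
      pr _ hInt i w = 0 := by
    intro k w hw i hi
    rw [hWeq k] at hw
    exact pr_eq_zero_of_mem_iSup hInt hw (by omega)
  have hprF : ∀ p : ℤ, ∀ w ∈ F p, ∀ i : ℤ × ℤ, i.1 < p →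
      pr _ hInt i w = 0 := by
    intro p w hw i hi
    rw [hFeq p] at hw
    exact pr_eq_zero_of_mem_iSup hInt hw (by omega)
  -- conjugation-compatibility of S
  have hSconj : ∀ k : ℤ, ∀ u v : V, S k (σ u) (σ v) = (starRingEnd ℂ) (S k u v) := by
    intro k
    obtain ⟨s, hs1, _, hs3⟩ := hQform
    have hssub : ∀ x ∈ s, x ∈ VQ := fun x hx => hs1 ▸ Submodule.subset_span hx
    exact conj_form σ (S k) s hs3 (fun x hx => hfix x (hssub x hx))
      (fun x hx y hy => hSrat k x (hssub x hx) y (hssub y hy))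
  -- Deligne conjugation symmetry, concrete form
  have hσI : ∀ p q : ℤ, ∀ u ∈ I p q, ∃ u' ∈ I q p, ∃ w ∈ lowPart I p q, u = σ u' + w := by
    intro p q u hu
    have h1 : u ∈ I p q ⊔ lowPart I p q := Submodule.mem_sup_left hu
    rw [hconj p q] at h1
    obtain ⟨x, hx, w, hw, hxw⟩ := Submodule.mem_sup.mp h1
    obtain ⟨u', hu', rfl⟩ := hx
    exact ⟨u', hu', w, hw, hxw.symm⟩
  have hlow : ∀ p q : ℤ, lowPart I p q ≤ W (p + q - 2) := by
    intro p q
    refine iSup₂_le fun rs hrs => hJW rs _ (by omega)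
  -- first bilinear relation, index form
  have hrel : ∀ k a b c d : ℤ, a + b ≤ k → c + d ≤ k → k < a + c →
      ∀ u ∈ I a b, ∀ v ∈ I c d, S k u v = 0 := by
    intro k a b c d hab hcd hac u hu v hv
    refine hF.2.2.1 k a u ⟨hJF (a, b) hu, hJW (a, b) k hab hu⟩ v
      ⟨hFanti (k - a + 1) c (by omega) (hJF (c, d) hv), hJW (c, d) k hcd hv⟩
  -- full orthogonality
  have horth : ∀ k a b c d : ℤ, a + b ≤ k → c + d ≤ k → (a + c ≠ k ∨ b + d ≠ k) →
      ∀ u ∈ I a b, ∀ v ∈ I c d, S k u v = 0 := by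
    intro k a b c d hab hcd hne u hu v hv
    by_cases h1 : a + b < k
    · exact hS.1 k u v (hJW (a, b) (k - 1) (by omega) hu)
    by_cases h2 : c + d < k
    · exact hS.2.1 k u v (hJW (c, d) (k - 1) (by omega) hv)
    have hab' : a + b = k := by omega
    have hcd' : c + d = k := by omega
    have hack : a + c ≠ k := by omega
    rcases lt_or_gt_of_ne hack with hlt | hgt
    · -- a + c < k, so b + d > k; use conjugation
      obtain ⟨u', hu', w, hw, rfl⟩ := hσI a b u hu
      obtain ⟨v', hv', w', hw', rfl⟩ := hσI c d v hv
      have hwW : w ∈ W (k - 1) := hWmono (a + b - 2) (k - 1) (by omega) (hlow a b hw)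
      have hw'W : w' ∈ W (k - 1) := hWmono (c + d - 2) (k - 1) (by omega) (hlow c d hw')
      have e1 : S k (σ u' + w) (σ v' + w') = S k (σ u') (σ v') + S k (σ u') w'
          + (S k w (σ v') + S k w w') := by
        simp only [map_add, LinearMap.add_apply]
        ring
      rw [e1, hS.2.1 k _ _ hw'W, hS.1 k _ _ hwW, hS.1 k _ _ hwW,
        hSconj k u' v', hrel k b a d c (by omega) (by omega) (by omega) u' hu' v' hv']
      simp
    · exact hrel k a b c d hab hcd hgt u hu v hv
  -- membership unfoldings
  have memMaps : ∀ (P Q : Submodule ℂ V) (X : Module.End ℂ V),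
      X ∈ mapsInto P Q ↔ ∀ v ∈ P, X v ∈ Q := fun _ _ _ => Iff.rfl
  have memIso : ∀ X : Module.End ℂ V, X ∈ infinIsom W S ↔
      ∀ k : ℤ, ∀ u ∈ W k, ∀ v ∈ W k, S k (X u) v + S k u (X v) = 0 :=
    fun _ => Iff.rfl
  have memLie : ∀ X : Module.End ℂ V, X ∈ lieGC W S ↔
      ((∀ k : ℤ, ∀ v ∈ W k, X v ∈ W k) ∧
        ∀ k : ℤ, ∀ u ∈ W k, ∀ v ∈ W k, S k (X u) v + S k u (X v) = 0) := by
    intro X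
    rw [lieGC, Submodule.mem_inf, memIso]
    constructor
    · rintro ⟨h1, h2⟩
      exact ⟨fun k => (memMaps _ _ X).mp (Submodule.mem_iInf _ |>.mp h1 k), h2⟩
    · rintro ⟨h1, h2⟩
      exact ⟨Submodule.mem_iInf _ |>.mpr fun k => (memMaps _ _ X).mpr (h1 k), h2⟩
  have memShift : ∀ (rs : ℤ × ℤ) (X : Module.End ℂ V), X ∈ endShiftI I rs.1 rs.2 ↔
      ∀ i : ℤ × ℤ, ∀ v ∈ I i.1 i.2, X v ∈ I (i.1 + rs.1) (i.2 + rs.2) := by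
    intro rs X
    rw [endShiftI, Submodule.mem_iInf]
    exact ⟨fun hh i => (memMaps _ _ X).mp (hh i), fun hh i => (memMaps _ _ X).mpr (hh i)⟩
  have memStab : ∀ X : Module.End ℂ V, X ∈ stabF F ↔ ∀ p : ℤ, ∀ v ∈ F p, X v ∈ F p := by
    intro X
    rw [stabF, Submodule.mem_iInf]
    exact ⟨fun hh p => (memMaps _ _ X).mp (hh p), fun hh p => (memMaps _ _ X).mpr (hh p)⟩
  -- the bigraded components of an endomorphism
  set Ycpt : ℤ × ℤ → Module.End ℂ V → Module.End ℂ V :=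
    fun rs X => cpt hInt T (fun i => i + rs) X with hYdef
  have hprbot : ∀ i ∉ T, ∀ w : V, pr _ hInt i w = 0 := fun i hi w =>
    (Submodule.mem_bot ℂ).mp ((hT i hi) ▸ pr_mem hInt i w)
  have hYap : ∀ (rs : ℤ × ℤ) (X : Module.End ℂ V) (i : ℤ × ℤ) (v : V), v ∈ I i.1 i.2 →
      Ycpt rs X v = pr _ hInt (i + rs) (X v) := fun rs X i v hv =>
    cpt_apply_of_mem hInt T hT (fun j => j + rs) X (j := i) hv
  have hYmem : ∀ (rs : ℤ × ℤ) (X : Module.End ℂ V) (i : ℤ × ℤ) (v : V), v ∈ I i.1 i.2 →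
      Ycpt rs X v ∈ I (i.1 + rs.1) (i.2 + rs.2) := fun rs X i v hv =>
    cpt_mem hInt T hT (fun j => j + rs) X (j := i) hv
  -- per-piece infinitesimal isometry property of components
  have hYisoPiece : ∀ rs : ℤ × ℤ, rs.1 + rs.2 ≤ 0 → ∀ X : Module.End ℂ V,
      (∀ k : ℤ, ∀ v ∈ W k, X v ∈ W k) →
      (∀ k : ℤ, ∀ u ∈ W k, ∀ v ∈ W k, S k (X u) v + S k u (X v) = 0) →
      ∀ k : ℤ, ∀ i j : ℤ × ℤ, i.1 + i.2 ≤ k → j.1 + j.2 ≤ k →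
      ∀ u ∈ I i.1 i.2, ∀ v ∈ I j.1 j.2,
      S k (Ycpt rs X u) v + S k u (Ycpt rs X v) = 0 := by
    intro rs hrs X hXW hXS k i j hik hjk u hu v hv
    have hYu := hYmem rs X i u hu
    have hYv := hYmem rs X j v hv
    by_cases h1 : i.1 + i.2 < k
    · rw [hS.1 k _ v (hJW (i.1 + rs.1, i.2 + rs.2) (k - 1) (by dsimp only; omega) hYu),
        hS.1 k u _ (hJW i (k - 1) (by omega) hu)]
      ring
    by_cases h2 : j.1 + j.2 < k
    · rw [hS.2.1 k _ v (hJW j (k - 1) (by omega) hv),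
        hS.2.1 k u _ (hJW (j.1 + rs.1, j.2 + rs.2) (k - 1) (by dsimp only; omega) hYv)]
      ring
    by_cases h3 : (i.1 + rs.1) + j.1 = k ∧ (i.2 + rs.2) + j.2 = k
    · obtain ⟨hA, hB⟩ := h3
      have hXrel := hXS k u (hJW i k hik hu) v (hJW j k hjk hv)
      have hXuW : X u ∈ W k := hXW k u (hJW i k hik hu)
      have hXvW : X v ∈ W k := hXW k v (hJW j k hjk hv)
      have c1 : S k (X u) v = S k (Ycpt rs X u) v := by
        rw [hYap rs X i u hu]
        conv_lhs => rw [← pr_sum hInt T hT (X u)]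
        rw [map_sum, LinearMap.sum_apply]
        refine Finset.sum_eq_single (i + rs) ?_ ?_
        · intro m _ hmne
          by_cases hmw : m.1 + m.2 ≤ k
          · have hne' : ¬(m.1 = i.1 + rs.1 ∧ m.2 = i.2 + rs.2) := by
              simpa [Prod.ext_iff] using hmne
            exact horth k m.1 m.2 j.1 j.2 hmw hjk (by omega) _ (pr_mem hInt m (X u)) v hv
          · rw [hprW k (X u) hXuW m (by omega)]
            simp
        · intro hnotT
          rw [hprbot _ hnotT]
          simp
      have c2 : S k u (X v) = S k u (Ycpt rs X v) := by
        rw [hYap rs X j v hv]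
        conv_lhs => rw [← pr_sum hInt T hT (X v)]
        rw [map_sum]
        refine Finset.sum_eq_single (j + rs) ?_ ?_
        · intro m _ hmne
          by_cases hmw : m.1 + m.2 ≤ k
          · have hne' : ¬(m.1 = j.1 + rs.1 ∧ m.2 = j.2 + rs.2) := by
              simpa [Prod.ext_iff] using hmne
            exact horth k i.1 i.2 m.1 m.2 hik hmw (by omega) u hu _ (pr_mem hInt m (X v))
          · rw [hprW k (X v) hXvW m (by omega)]
            simp
        · intro hnotT
          rw [hprbot _ hnotT]
          simp
      rw [← c1, ← c2]
      exact hXrel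
    · rw [horth k (i.1 + rs.1) (i.2 + rs.2) j.1 j.2 (by omega) hjk (by omega) _ hYu v hv,
        horth k i.1 i.2 (j.1 + rs.1) (j.2 + rs.2) hik (by omega) (by omega) u hu _ hYv]
      ring
  -- components of elements of lieGC lie in lieGC
  have hYW : ∀ rs : ℤ × ℤ, rs.1 + rs.2 ≤ 0 → ∀ X : Module.End ℂ V,
      Ycpt rs X ∈ (⨅ k : ℤ, mapsInto (W k) (W k)) := by
    intro rs hrs X
    rw [Submodule.mem_iInf]
    intro k
    rw [memMaps]
    intro w hw
    rw [hWeq k] at hw ⊢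
    exact mapsInto_iSup (f := fun i => i + rs)
      (fun i v hv => hYmem rs X i v hv)
      (fun i hi => by simp only [Prod.fst_add, Prod.snd_add]; omega) w hw
  have hYiso : ∀ rs : ℤ × ℤ, rs.1 + rs.2 ≤ 0 → ∀ X ∈ lieGC W S,
      Ycpt rs X ∈ infinIsom W S := by
    intro rs hrs X hX
    obtain ⟨hXW, hXS⟩ := (memLie X).mp hX
    rw [memIso]
    intro k u hu v hv
    have a1 : Ycpt rs X u = ∑ m ∈ T, Ycpt rs X (pr _ hInt m u) := by
      conv_lhs => rw [← pr_sum hInt T hT u]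
      exact map_sum _ _ _
    have b1 : Ycpt rs X v = ∑ n ∈ T, Ycpt rs X (pr _ hInt n v) := by
      conv_lhs => rw [← pr_sum hInt T hT v]
      exact map_sum _ _ _
    have a2 : S k (Ycpt rs X u) v
        = ∑ m ∈ T, ∑ n ∈ T, S k (Ycpt rs X (pr _ hInt m u)) (pr _ hInt n v) := by
      rw [a1, map_sum, LinearMap.sum_apply]
      refine Finset.sum_congr rfl fun m _ => ?_
      conv_lhs => rw [← pr_sum hInt T hT v]
      exact map_sum _ _ _
    have a3 : S k u (Ycpt rs X v)
        = ∑ m ∈ T, ∑ n ∈ T, S k (pr _ hInt m u) (Ycpt rs X (pr _ hInt n v)) := by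
      conv_lhs => rw [← pr_sum hInt T hT u]
      rw [map_sum, LinearMap.sum_apply]
      refine Finset.sum_congr rfl fun m _ => ?_
      rw [b1, map_sum]
    rw [a2, a3, ← Finset.sum_add_distrib]
    refine Finset.sum_eq_zero fun m _ => ?_
    rw [← Finset.sum_add_distrib]
    refine Finset.sum_eq_zero fun n _ => ?_
    by_cases hm : m.1 + m.2 ≤ k
    · by_cases hn : n.1 + n.2 ≤ k
      · exact hYisoPiece rs hrs X hXW hXS k m n hm hn _ (pr_mem hInt m u) _ (pr_mem hInt n v)
      · rw [hprW k v hv n (by omega)]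
        simp
    · rw [hprW k u hu m (by omega)]
      simp
  have hYshift : ∀ (rs : ℤ × ℤ) (X : Module.End ℂ V), Ycpt rs X ∈ endShiftI I rs.1 rs.2 := by
    intro rs X
    rw [memShift]
    exact fun i v hv => hYmem rs X i v hv
  have hYgrs : ∀ rs : ℤ × ℤ, rs.1 + rs.2 ≤ 0 → ∀ X ∈ lieGC W S,
      Ycpt rs X ∈ grs W S I rs.1 rs.2 := by
    intro rs hrs X hX
    exact Submodule.mem_inf.mpr ⟨Submodule.mem_inf.mpr
      ⟨hYW rs hrs X, hYiso rs hrs X hX⟩, hYshift rs X⟩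
  -- vanishing of components
  have hz1 : ∀ rs : ℤ × ℤ, 0 < rs.1 + rs.2 → ∀ X : Module.End ℂ V,
      (∀ k : ℤ, ∀ v ∈ W k, X v ∈ W k) → Ycpt rs X = 0 := by
    intro rs hrs X hXW
    refine end_eq_zero hInt T hT fun i v hv => ?_
    rw [hYap rs X i v hv]
    exact hprW (i.1 + i.2) (X v) (hXW _ v (hJW i _ le_rfl hv)) (i + rs)
      (by simp only [Prod.fst_add, Prod.snd_add]; omega)
  have hz2 : ∀ rs : ℤ × ℤ, rs.1 < 0 → ∀ X : Module.End ℂ V,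
      (∀ p : ℤ, ∀ v ∈ F p, X v ∈ F p) → Ycpt rs X = 0 := by
    intro rs hrs X hXF
    refine end_eq_zero hInt T hT fun i v hv => ?_
    rw [hYap rs X i v hv]
    exact hprF i.1 (X v) (hXF i.1 v (hJF i hv)) (i + rs)
      (by simp only [Prod.fst_add]; omega)
  -- decomposition into components
  have hdec : ∀ (p : ℤ × ℤ → Prop) (hp : DecidablePred p), ∀ X : Module.End ℂ V,
      (∀ rs ∈ D, ¬ p rs → Ycpt rs X = 0) → X = ∑ rs ∈ @Finset.filter _ p hp D, Ycpt rs X := by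
    intro p hp X h0
    have h1 := sum_cpt hInt T hT D hD X
    rw [Finset.sum_filter_of_ne (fun rs hrs hne => by
      by_contra hp
      exact hne (h0 rs hrs hp))]
    exact h1.symm
  -- membership in the big sups
  have hmemSup : ∀ (P : ℤ × ℤ → Prop) (rs : ℤ × ℤ), P rs → ∀ Xp ∈ grs W S I rs.1 rs.2,
      Xp ∈ ⨆ (rs' : ℤ × ℤ) (_ : P rs'), grs W S I rs'.1 rs'.2 := fun P rs hP Xp hXp =>
    Submodule.mem_iSup_of_mem rs (Submodule.mem_iSup_of_mem hP hXp)
  have hgrs_le : ∀ rs : ℤ × ℤ, grs W S I rs.1 rs.2 ≤ lieGC W S := fun rs => inf_le_left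
  have hgrs_le2 : ∀ rs : ℤ × ℤ, grs W S I rs.1 rs.2 ≤ endShiftI I rs.1 rs.2 :=
    fun rs => inf_le_right
  have hstabY : ∀ rs : ℤ × ℤ, 0 ≤ rs.1 → ∀ X : Module.End ℂ V, Ycpt rs X ∈ stabF F := by
    intro rs hr X
    rw [memStab]
    intro p v hv
    rw [hFeq p] at hv ⊢
    exact mapsInto_iSup (f := fun i => i + rs) (fun i w hw => hYmem rs X i w hw)
      (fun i hi => by simp only [Prod.fst_add]; omega) v hv
  refine ⟨?_, ?_, ?_, ?_, ?_⟩
  · -- Goal 1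
    apply le_antisymm
    · exact iSup₂_le fun rs _ => hgrs_le rs
    · intro X hX
      rw [hdec (fun rs => rs.1 + rs.2 ≤ 0) inferInstance X
        (fun rs _ hne => hz1 rs (by by_contra hc; exact hne (show rs.1 + rs.2 ≤ 0 by omega))
          X ((memLie X).mp hX).1)]
      exact Submodule.sum_mem _ fun rs hrs =>
        hmemSup _ rs (Finset.mem_filter.mp hrs).2 _
          (hYgrs rs (Finset.mem_filter.mp hrs).2 X hX)
  · -- Goal 2: independence
    intro rs hrs
    rw [eq_bot_iff]
    intro X hX
    obtain ⟨hX1, hX2⟩ := Submodule.mem_inf.mp hX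
    rw [Submodule.mem_bot]
    have hXsh := (memShift rs X).mp (hgrs_le2 rs hX1)
    have hK : X ∈ ⨅ pq : ℤ × ℤ, mapsInto (I pq.1 pq.2)
        (LinearMap.ker (pr _ hInt (pq + rs))) := by
      refine iSup₂_le (fun rs' hrs' => le_trans (hgrs_le2 rs')
        (le_iInf fun pq => le_trans (iInf_le _ pq) ?_)) hX2
      intro X' hX' v hv
      have hXv : X' v ∈ I (pq.1 + rs'.1) (pq.2 + rs'.2) := hX' v hv
      exact LinearMap.mem_ker.mpr
        (pr_of_mem_ne hInt (fun e => hrs'.1 (add_left_cancel e).symm) hXv)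
    refine end_eq_zero hInt T hT fun i v hv => ?_
    have e1 : pr _ hInt (i + rs) (X v) = 0 :=
      LinearMap.mem_ker.mp ((Submodule.mem_iInf _ |>.mp hK i) v hv)
    have e2 : X v ∈ I (i.1 + rs.1) (i.2 + rs.2) := hXsh i v hv
    calc X v = pr _ hInt (i + rs) (X v) := (pr_of_mem_same hInt e2).symm
      _ = 0 := e1
  · -- Goal 3: stabilizer
    apply le_antisymm
    · intro X hX
      obtain ⟨hXl, hXst⟩ := Submodule.mem_inf.mp hX
      have hXF := (memStab X).mp hXst
      rw [hdec (fun rs => 0 ≤ rs.1 ∧ rs.1 + rs.2 ≤ 0) inferInstance X (fun rs _ hne => by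
        by_cases hr : rs.1 < 0
        · exact hz2 rs hr X hXF
        · refine hz1 rs ?_ X ((memLie X).mp hXl).1
          by_contra hc
          exact hne (show 0 ≤ rs.1 ∧ rs.1 + rs.2 ≤ 0 by omega))]
      exact Submodule.sum_mem _ fun rs hrs =>
        hmemSup _ rs (Finset.mem_filter.mp hrs).2 _
          (hYgrs rs (Finset.mem_filter.mp hrs).2.2 X hXl)
    · refine iSup₂_le fun rs hrs => le_inf (hgrs_le rs) ?_
      intro X hX
      rw [memStab]
      intro p v hv
      have hsh := (memShift rs X).mp (hgrs_le2 rs hX)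
      rw [hFeq p] at hv ⊢
      exact mapsInto_iSup (f := fun i => i + rs) (fun i w hw => hsh i w hw)
        (fun i hi => by simp only [Prod.fst_add]; omega) v hv
  · -- Goal 4a: trivial intersection
    rw [eq_bot_iff]
    intro X hX
    obtain ⟨hXmem, hXsup⟩ := Submodule.mem_inf.mp hX
    have hXF := (memStab X).mp (Submodule.mem_inf.mp hXmem).2
    rw [Submodule.mem_bot]
    have hK : X ∈ ⨅ pq : ℤ × ℤ, mapsInto (I pq.1 pq.2)
        (⨆ (i : ℤ × ℤ) (_ : i.1 < pq.1), I i.1 i.2) := by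
      refine iSup₂_le (fun rs' hrs' => le_trans (hgrs_le2 rs')
        (le_iInf fun pq => le_trans (iInf_le _ pq) ?_)) hXsup
      intro X' hX' v hv
      have hXv : X' v ∈ I (pq.1 + rs'.1) (pq.2 + rs'.2) := hX' v hv
      exact Submodule.mem_iSup_of_mem (pq + rs')
        (Submodule.mem_iSup_of_mem (by simp only [Prod.fst_add]; omega) hXv)
    refine end_eq_zero hInt T hT fun i v hv => ?_
    have e1 : X v ∈ ⨆ (m : ℤ × ℤ) (_ : m.1 < i.1), I m.1 m.2 :=
      (Submodule.mem_iInf _ |>.mp hK i) v hv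
    have e2 : X v ∈ F i.1 := hXF i.1 v (hJF i hv)
    rw [hFeq i.1] at e2
    exact eq_zero_of_disjoint_pieces hInt T hT
      (P := fun m => m.1 < i.1) (Q := fun m => i.1 ≤ m.1)
      (fun m hm hm' => by omega) e1 e2
  · -- Goal 4b: complement
    apply le_antisymm
    · exact sup_le inf_le_left (iSup₂_le fun rs _ => hgrs_le rs)
    · intro X hX
      have hXW := ((memLie X).mp hX).1
      have hdisj : Disjoint (D.filter (fun rs => 0 ≤ rs.1 ∧ rs.1 + rs.2 ≤ 0))
          (D.filter (fun rs => rs.1 < 0 ∧ rs.1 + rs.2 ≤ 0)) := by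
        refine Finset.disjoint_left.mpr fun rs h1 h2 => ?_
        have c1 := (Finset.mem_filter.mp h1).2
        have c2 := (Finset.mem_filter.mp h2).2
        omega
      have hsplit : X = (∑ rs ∈ D.filter (fun rs => 0 ≤ rs.1 ∧ rs.1 + rs.2 ≤ 0), Ycpt rs X)
          + ∑ rs ∈ D.filter (fun rs => rs.1 < 0 ∧ rs.1 + rs.2 ≤ 0), Ycpt rs X := by
        rw [← Finset.sum_union hdisj, ← Finset.filter_or]
        refine hdec _ _ X (fun rs _ hne => ?_)
        refine hz1 rs ?_ X hXW
        by_contra hc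
        exact hne (show (0 ≤ rs.1 ∧ rs.1 + rs.2 ≤ 0) ∨ (rs.1 < 0 ∧ rs.1 + rs.2 ≤ 0) by omega)
      rw [hsplit]
      refine Submodule.add_mem_sup ?_ ?_
      · refine Submodule.sum_mem _ fun rs hrs => ?_
        have hcond := (Finset.mem_filter.mp hrs).2
        exact Submodule.mem_inf.mpr
          ⟨hgrs_le rs (hYgrs rs hcond.2 X hX), hstabY rs hcond.1 X⟩
      · refine Submodule.sum_mem _ fun rs hrs => ?_
        have hcond := (Finset.mem_filter.mp hrs).2
        exact hmemSup _ rs hcond _ (hYgrs rs hcond.2 X hX)
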